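/- With the structure functions f_{i,j}(z), for integers i, j, k with i ≥ 1, j ≥ 1, i − k ≥ 1, j + k ≥ 1 the identity f_{1,i}(z)·f_{1,j}(x^{i−j−2k} z) = f_{1,i−k}(x^{−k} z)·f_{1,j+k}(x^{i−j−k} z) holds as formal power series in z. -/

import Mathlib

open PowerSeries

/-- `[s]_x = (x^s − x^{−s})/(x − x^{−1})` for real `s` (via complex powers). -/
noncomputable def qnum (x : ℂ) (s : ℝ) : ℂ := (x ^ (s : ℂ) - x ^ (-s : ℂ)) / (x - x⁻¹)

/-- Formal exponential of a power series (its `n`-th coefficient is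
`Σ_k (1/k!)·coeff_n(f^k)`; for `f` with zero constant term this is the usual
exponential `exp(f) = Σ_k f^k/k!`). -/
noncomputable def expPS (f : PowerSeries ℂ) : PowerSeries ℂ :=
  PowerSeries.mk fun n => ∑' k : ℕ, ((Nat.factorial k : ℂ))⁻¹ * (PowerSeries.coeff n) (f ^ k)

/-- The structure function
`f_{i,j}(z) = exp(−Σ_{m≥1} (1/m)[(r−1)m]_x[rm]_x(x−x^{−1})²·
  [min(i,j)m]_x([(N+1−max(i,j))m]_x − [(N−max(i,j))m]_x)/([m]_x([(N+1)m]_x−[Nm]_x))·z^m)`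
as a formal power series in `z`. -/
noncomputable def fps (x : ℂ) (r : ℝ) (N : ℕ) (i j : ℤ) : PowerSeries ℂ :=
  expPS (PowerSeries.mk fun m =>
    if m = 0 then 0 else
      -((1 / (m : ℂ)) * qnum x ((r - 1) * m) * qnum x (r * m) * (x - x⁻¹) ^ 2 *
        (qnum x ((min i j : ℤ) * m) *
            (qnum x (((N : ℤ) + 1 - max i j) * m) - qnum x (((N : ℤ) - max i j) * m)) /
          (qnum x (m : ℤ) * (qnum x (((N : ℤ) + 1) * m) - qnum x ((N : ℤ) * m))))))

/-- The formal power series expansion of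
`Δ(z) = (1 − x^{2r−1}z)(1 − x^{−2r+1}z)/((1 − xz)(1 − x^{−1}z))`. -/
noncomputable def Δps (x : ℂ) (r : ℝ) : PowerSeries ℂ :=
  (1 - PowerSeries.C (x ^ ((2 * r - 1 : ℝ) : ℂ)) * PowerSeries.X) *
    (1 - PowerSeries.C (x ^ ((-2 * r + 1 : ℝ) : ℂ)) * PowerSeries.X) *
    PowerSeries.mk (fun n => x ^ n) * PowerSeries.mk (fun n => x⁻¹ ^ n)

/-!
Write `f_{1,j} = exp(F_j)`. The exponential turns sums into products and commutes with
`z ↦ c z`, so it suffices to prove the additive identity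
`F_i(z) + F_j(x^{i-j-2k} z) = F_{i-k}(x^{-k} z) + F_{j+k}(x^{i-j-k} z)`.
For `j ≥ 1` we have `min(1, j) = 1` and `max(1, j) = j`, so with `y = x^m` the `m`-th coefficient
of `F_j` is `α_m y^{-j} + β_m y^j` for some `α_m, β_m` not depending on `j`. Comparing
coefficients of `z^m`, both sides become `α_m (y^{-i} + y^{i-2j-2k}) + β_m (y^i + y^{i-2k})`.
-/

namespace PowerSeries

theorem coeff_pow_eq_zero_of_lt {R : Type*} [CommSemiring R] {f : R⟦X⟧}
    (hf : constantCoeff f = 0) {n k : ℕ} (h : n < k) : coeff n (f ^ k) = 0 :=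
  X_pow_dvd_iff.mp (pow_dvd_pow_of_dvd (X_dvd_iff.mpr hf) k) n h

theorem constantCoeff_rescale {R : Type*} [CommSemiring R] (c : R) (f : R⟦X⟧) :
    constantCoeff (rescale c f) = constantCoeff f := by
  rw [← coeff_zero_eq_constantCoeff_apply, coeff_rescale, pow_zero, one_mul,
    coeff_zero_eq_constantCoeff_apply]

variable {K : Type*} [Field K] [CharZero K] {f g : K⟦X⟧}

theorem coeff_exp_subst (hf : constantCoeff f = 0) (n : ℕ) :
    coeff n ((exp K).subst f) =
      ∑ k ∈ Finset.range (n + 1), (k.factorial : K)⁻¹ * coeff n (f ^ k) := by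
  rw [coeff_subst' (HasSubst.of_constantCoeff_zero' hf),
    finsum_eq_sum_of_support_subset (s := Finset.range (n + 1)) _ fun k hk => ?_]
  · simp only [coeff_exp, one_div, map_inv₀, map_natCast, smul_eq_mul]
  rw [Finset.coe_range, Set.mem_Iio]
  by_contra! hkn
  exact hk (smul_eq_zero_of_right _ (coeff_pow_eq_zero_of_lt hf hkn))

theorem constantCoeff_exp_subst (hf : constantCoeff f = 0) :
    constantCoeff ((exp K).subst f) = 1 := by
  simpa using coeff_exp_subst hf 0

theorem derivative_exp_subst (hf : constantCoeff f = 0) :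
    d⁄dX K ((exp K).subst f) = (exp K).subst f * d⁄dX K f := by
  rw [derivative_subst (HasSubst.of_constantCoeff_zero' hf), derivative_exp]

theorem exp_subst_mul_exp_subst_neg (hf : constantCoeff f = 0) :
    (exp K).subst f * (exp K).subst (-f) = 1 := by
  have hf' : constantCoeff (-f) = 0 := by rw [map_neg, hf, neg_zero]
  refine derivative.ext ?_ ?_
  · rw [derivative_one, Derivation.leibniz, derivative_exp_subst hf, derivative_exp_subst hf',
      map_neg, smul_eq_mul, smul_eq_mul]
    ring
  · rw [map_mul, map_one, constantCoeff_exp_subst hf, constantCoeff_exp_subst hf', one_mul]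

theorem exp_subst_add (hf : constantCoeff f = 0) (hg : constantCoeff g = 0) :
    (exp K).subst (f + g) = (exp K).subst f * (exp K).subst g := by
  have hfg : constantCoeff (f + g) = 0 := by rw [map_add, hf, hg, add_zero]
  have hfg' : constantCoeff (-(f + g)) = 0 := by rw [map_neg, hfg, neg_zero]
  have key : (exp K).subst f * (exp K).subst g * (exp K).subst (-(f + g)) = 1 := by
    refine derivative.ext ?_ ?_
    · simp only [derivative_one, Derivation.leibniz, derivative_exp_subst hf,
        derivative_exp_subst hg, derivative_exp_subst hfg', map_neg, map_add, smul_eq_mul]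
      ring
    · simp only [map_mul, map_one, constantCoeff_exp_subst hf, constantCoeff_exp_subst hg,
        constantCoeff_exp_subst hfg', one_mul]
  linear_combination (exp K).subst f * (exp K).subst g * exp_subst_mul_exp_subst_neg hfg -
    (exp K).subst (f + g) * key

theorem rescale_exp_subst (c : K) (hf : constantCoeff f = 0) :
    rescale c ((exp K).subst f) = (exp K).subst (rescale c f) := by
  rw [rescale_eq_subst, rescale_eq_subst,
    subst_comp_subst_apply (HasSubst.of_constantCoeff_zero' hf) (HasSubst.smul_X' c)]

end PowerSeries

section ZpowSeries

variable {K : Type*} [Field K]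

noncomputable def zpowSeries (α β : ℕ → K) (y : K) (t : ℤ) : K⟦X⟧ :=
  mk fun m => α m * (y ^ m) ^ (-t) + β m * (y ^ m) ^ t

theorem zpowSeries_add_rescale {y : K} (hy : y ≠ 0) (α β : ℕ → K) (i j k : ℤ) :
    zpowSeries α β y i + rescale (y ^ (i - j - 2 * k)) (zpowSeries α β y j) =
      rescale (y ^ (-k)) (zpowSeries α β y (i - k)) +
        rescale (y ^ (i - j - k)) (zpowSeries α β y (j + k)) := by
  ext m
  have hym : y ^ m ≠ 0 := pow_ne_zero m hy
  have hcomm : ∀ a : ℤ, (y ^ a) ^ m = (y ^ m) ^ a := fun a => by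
    rw [← zpow_natCast, ← zpow_mul, mul_comm, zpow_mul, zpow_natCast]
  simp only [zpowSeries, rescale_mk, map_add, coeff_mk, hcomm, mul_add, mul_left_comm _ (α m),
    mul_left_comm _ (β m), ← zpow_add₀ hym]
  ring_nf

end ZpowSeries

theorem expPS_eq_exp_subst {f : ℂ⟦X⟧} (hf : constantCoeff f = 0) :
    expPS f = (exp ℂ).subst f := by
  ext n
  rw [expPS, coeff_mk, coeff_exp_subst hf]
  exact tsum_eq_sum fun k hk => by
    rw [coeff_pow_eq_zero_of_lt hf (by simpa using hk), mul_zero]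

noncomputable def fpsExponent (x : ℂ) (r : ℝ) (N : ℕ) (i j : ℤ) : PowerSeries ℂ :=
  PowerSeries.mk fun m =>
    if m = 0 then 0 else
      -((1 / (m : ℂ)) * qnum x ((r - 1) * m) * qnum x (r * m) * (x - x⁻¹) ^ 2 *
        (qnum x ((min i j : ℤ) * m) *
            (qnum x (((N : ℤ) + 1 - max i j) * m) - qnum x (((N : ℤ) - max i j) * m)) /
          (qnum x (m : ℤ) * (qnum x (((N : ℤ) + 1) * m) - qnum x ((N : ℤ) * m)))))

theorem constantCoeff_fpsExponent (x : ℂ) (r : ℝ) (N : ℕ) (i j : ℤ) :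
    constantCoeff (fpsExponent x r N i j) = 0 := by
  simp [fpsExponent]

theorem fps_eq_exp_subst (x : ℂ) (r : ℝ) (N : ℕ) (i j : ℤ) :
    fps x r N i j = (exp ℂ).subst (fpsExponent x r N i j) :=
  expPS_eq_exp_subst (constantCoeff_fpsExponent x r N i j)

theorem qnum_intCast_mul (x : ℂ) (t : ℤ) (m : ℕ) :
    qnum x (t * m) = ((x ^ m) ^ t - (x ^ m) ^ (-t)) / (x - x⁻¹) := by
  rw [qnum, ← zpow_natCast, ← zpow_mul, ← zpow_mul, ← Complex.cpow_intCast,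
    ← Complex.cpow_intCast]
  push_cast
  ring_nf

theorem exists_fpsExponent_one_eq_zpowSeries {x : ℂ} (hx : x ≠ 0) (r : ℝ) (N : ℕ) :
    ∃ α β : ℕ → ℂ, ∀ j : ℤ, 1 ≤ j →
      fpsExponent x r N 1 j = zpowSeries α β x j := by
  let c : ℕ → ℂ := fun m => if m = 0 then 0 else
    -((1 / (m : ℂ)) * qnum x ((r - 1) * m) * qnum x (r * m) * (x - x⁻¹) ^ 2 *
        qnum x ((1 : ℤ) * m) /
      (qnum x (m : ℤ) * (qnum x (((N : ℤ) + 1) * m) - qnum x ((N : ℤ) * m)))) / (x - x⁻¹)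
  refine ⟨fun m => c m * ((x ^ m) ^ ((N : ℤ) + 1) - (x ^ m) ^ (N : ℤ)),
    fun m => c m * ((x ^ m) ^ (-(N : ℤ)) - (x ^ m) ^ (-((N : ℤ) + 1))), fun j hj => ?_⟩
  ext m
  have hxm : x ^ m ≠ 0 := pow_ne_zero m hx
  have hC := qnum_intCast_mul x ((N : ℤ) + 1 - j) m
  have hD := qnum_intCast_mul x ((N : ℤ) - j) m
  push_cast at hC hD
  simp only [fpsExponent, zpowSeries, coeff_mk, min_eq_left hj, max_eq_right hj, c]
  split_ifs with hm
  · simp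
  · push_cast
    rw [hC, hD]
    simp only [zpow_sub₀ hxm, zpow_add₀ hxm, zpow_neg, zpow_one]
    field_simp
    ring

theorem fps_shift_fusion_general (x : ℂ) (hx0 : x ≠ 0)
    (r : ℝ) (N : ℕ) (i j k : ℤ)
    (hi : 1 ≤ i) (hj : 1 ≤ j) (hik : 1 ≤ i - k) (hjk : 1 ≤ j + k) :
    fps x r N 1 i * PowerSeries.rescale (x ^ (i - j - 2 * k)) (fps x r N 1 j) =
      PowerSeries.rescale (x ^ (-k)) (fps x r N 1 (i - k)) *
        PowerSeries.rescale (x ^ (i - j - k)) (fps x r N 1 (j + k)) := by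
  have h0 : ∀ c t, constantCoeff (rescale c (fpsExponent x r N 1 t)) = 0 := fun c t =>
    (constantCoeff_rescale c _).trans (constantCoeff_fpsExponent ..)
  obtain ⟨α, β, hF⟩ := exists_fpsExponent_one_eq_zpowSeries hx0 r N
  simp only [fps_eq_exp_subst, rescale_exp_subst _ (constantCoeff_fpsExponent ..)]
  rw [← exp_subst_add (constantCoeff_fpsExponent ..) (h0 _ _),
    ← exp_subst_add (h0 _ _) (h0 _ _), hF i hi, hF j hj, hF _ hik, hF _ hjk,
    zpowSeries_add_rescale hx0]

/-- `f_{1,i}(z)·f_{1,j}(x^{i−j−2k} z) = f_{1,i−k}(x^{−k} z)·f_{1,j+k}(x^{i−j−k} z)`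
for `i, j, i−k, j+k ≥ 1`. -/
theorem fps_shift_fusion (x : ℂ) (hx0 : x ≠ 0) (hx1 : ‖x‖ < 1)
    (r : ℝ) (hr : 1 < r) (N : ℕ) (hN : 1 ≤ N) (i j k : ℤ)
    (hi : 1 ≤ i) (hj : 1 ≤ j) (hik : 1 ≤ i - k) (hjk : 1 ≤ j + k) :
    fps x r N 1 i * PowerSeries.rescale (x ^ (i - j - 2 * k)) (fps x r N 1 j) =
      PowerSeries.rescale (x ^ (-k)) (fps x r N 1 (i - k)) *
        PowerSeries.rescale (x ^ (i - j - k)) (fps x r N 1 (j + k)) :=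
  fps_shift_fusion_general x hx0 r N i j k hi hj hik hjk
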